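/- The time-ordered exponential solves the linear ODE: if g(b) = 1 + Σ_{n≥1} ∫_{a≤s₁≤⋯≤sₙ≤b} α(s₁)⋯α(sₙ) ds₁⋯dsₙ for a continuous function α with values in a Banach algebra, then g is the unique solution of g'(t) = g(t)·α(t) with g(a) = 1. -/

import Mathlib

open intervalIntegral

variable {A : Type*} [NormedRing A] [NormedAlgebra ℝ A] [CompleteSpace A]

/-- The `n`-th iterated integral `∫_{a ≤ s₁ ≤ ⋯ ≤ sₙ ≤ t} α(s₁)⋯α(sₙ) ds₁⋯dsₙ`,
written as a nested (recursive) interval integral over the ordered simplex. -/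
noncomputable def orderedIterIntegral (α : ℝ → A) (a : ℝ) : ℕ → ℝ → A
  | 0 => fun _ => 1
  | n + 1 => fun t => ∫ s in a..t, orderedIterIntegral α a n s * α s

/-- The time-ordered exponential
`g(t) = 1 + Σ_{n ≥ 1} ∫_{a ≤ s₁ ≤ ⋯ ≤ sₙ ≤ t} α(s₁)⋯α(sₙ) ds₁⋯dsₙ`. -/
noncomputable def timeOrderedExp (α : ℝ → A) (a : ℝ) (t : ℝ) : A :=
  ∑' n : ℕ, orderedIterIntegral α a n t

/-!
The iterated integrals satisfy `Iₙ₊₁(t) = ∫ₐᵗ Iₙ(s) α(s) ds`, so by induction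
`‖Iₙ(t)‖ ≤ ‖1‖ (M (t - a))ⁿ / n!` on `[a, b]`, where `M` bounds `‖α‖` there (`‖1‖` need not
be `1`). Hence the series converges uniformly on `[a, b]` and may be integrated termwise, which
gives the integral equation `g(t) = 1 + ∫ₐᵗ g(s) α(s) ds`; the fundamental theorem of calculus
turns it into `g' = g α`. Uniqueness is Grönwall's inequality for the vector field `x ↦ x α(t)`,
which is Lipschitz with constant `sup ‖α‖`.
-/

open Set MeasureTheory
open scoped Nat Interval

theorem integral_sub_pow (a t : ℝ) (n : ℕ) :
    ∫ s in a..t, (s - a) ^ n = (t - a) ^ (n + 1) / (n + 1) := by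
  simp [integral_comp_sub_right (fun x : ℝ => x ^ n), integral_pow]

theorem hasDerivWithinAt_integral_Icc {E : Type*} [NormedAddCommGroup E] [NormedSpace ℝ E]
    [CompleteSpace E] {f : ℝ → E} {a b t : ℝ} (hf : ContinuousOn f (Icc a b))
    (ht : t ∈ Icc a b) :
    HasDerivWithinAt (fun u => ∫ s in a..u, f s) (f t) (Icc a b) t := by
  have : Fact (t ∈ Icc a b) := ⟨ht⟩
  exact integral_hasDerivWithinAt_right
    ((hf.mono (Icc_subset_Icc_right ht.2)).intervalIntegrable_of_Icc ht.1)
    (hf.stronglyMeasurableAtFilter_nhdsWithin measurableSet_Icc t) (hf t ht)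

omit [CompleteSpace A] in
theorem eqOn_of_hasDerivWithinAt_mul_right {α f g : ℝ → A} {a b : ℝ}
    (hα : ContinuousOn α (Icc a b))
    (hf : ∀ t ∈ Icc a b, HasDerivWithinAt f (f t * α t) (Icc a b) t)
    (hg : ∀ t ∈ Icc a b, HasDerivWithinAt g (g t * α t) (Icc a b) t) (ha : f a = g a) :
    EqOn f g (Icc a b) := by
  obtain ⟨K, hK⟩ := (isCompact_Icc.image_of_continuousOn hα.nnnorm).bddAbove
  have hv : ∀ t ∈ Ico a b, LipschitzOnWith K (fun x : A => x * α t) univ := fun t ht =>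
    ((lipschitzWith_smul (MulOpposite.op (α t))).weaken
      (hK (mem_image_of_mem _ (Ico_subset_Icc_self ht)))).lipschitzOnWith
  have hIci : ∀ h : ℝ → A, (∀ t ∈ Icc a b, HasDerivWithinAt h (h t * α t) (Icc a b) t) →
      ∀ t ∈ Ico a b, HasDerivWithinAt h (h t * α t) (Ici t) t := fun h hh t ht =>
    (hh t (Ico_subset_Icc_self ht)).mono_of_mem_nhdsWithin (Icc_mem_nhdsGE_of_mem ht)
  exact ODE_solution_unique_of_mem_Icc_right hv (fun t ht => (hf t ht).continuousWithinAt)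
    (hIci f hf) (fun _ _ => trivial) (fun t ht => (hg t ht).continuousWithinAt) (hIci g hg)
    (fun _ _ => trivial) ha

section OrderedIterIntegral

omit [CompleteSpace A]

variable {α : ℝ → A} {a b M : ℝ}

theorem continuous_orderedIterIntegral (hα : Continuous α) (a : ℝ) (n : ℕ) :
    Continuous (orderedIterIntegral α a n) := by
  induction n with
  | zero => exact continuous_const
  | succ n ih => exact continuous_primitive (fun _ _ => (ih.mul hα).intervalIntegrable _ _) a

theorem orderedIterIntegral_succ_self (α : ℝ → A) (a : ℝ) (n : ℕ) :
    orderedIterIntegral α a (n + 1) a = 0 :=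
  integral_same

theorem timeOrderedExp_self (α : ℝ → A) (a : ℝ) : timeOrderedExp α a a = 1 := by
  rw [timeOrderedExp, tsum_eq_single 0 fun n hn => ?_]
  · rfl
  · obtain ⟨n, rfl⟩ := Nat.exists_eq_succ_of_ne_zero hn
    exact orderedIterIntegral_succ_self α a n

theorem norm_orderedIterIntegral_le (hM : ∀ s ∈ Icc a b, ‖α s‖ ≤ M) (n : ℕ) {t : ℝ}
    (ht : t ∈ Icc a b) :
    ‖orderedIterIntegral α a n t‖ ≤ ‖(1 : A)‖ * ((M * (t - a)) ^ n / n !) := by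
  induction n generalizing t with
  | zero => simp [orderedIterIntegral]
  | succ n ih =>
    have hbound : ∀ s ∈ Ioc a t, ‖orderedIterIntegral α a n s * α s‖
        ≤ ‖(1 : A)‖ * M ^ (n + 1) / n ! * (s - a) ^ n := by
      intro s hs
      have hs' : s ∈ Icc a b := ⟨hs.1.le, hs.2.trans ht.2⟩
      calc ‖orderedIterIntegral α a n s * α s‖
          ≤ ‖(1 : A)‖ * ((M * (s - a)) ^ n / n !) * M :=
            (norm_mul_le _ _).trans <| mul_le_mul (ih hs') (hM s hs') (norm_nonneg _)
              ((norm_nonneg _).trans (ih hs'))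
        _ = ‖(1 : A)‖ * M ^ (n + 1) / n ! * (s - a) ^ n := by rw [mul_pow]; ring
    calc ‖orderedIterIntegral α a (n + 1) t‖
        ≤ ∫ s in a..t, ‖(1 : A)‖ * M ^ (n + 1) / n ! * (s - a) ^ n :=
          intervalIntegral.norm_integral_le_of_norm_le ht.1 (ae_of_all _ hbound)
            (Continuous.intervalIntegrable (by fun_prop) _ _)
      _ = ‖(1 : A)‖ * ((M * (t - a)) ^ (n + 1) / (n + 1)!) := by
          rw [intervalIntegral.integral_const_mul, integral_sub_pow, Nat.factorial_succ]
          push_cast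
          field_simp
          rw [mul_pow]
          ring

theorem norm_orderedIterIntegral_le_uniform (hM : ∀ s ∈ Icc a b, ‖α s‖ ≤ M) (n : ℕ)
    {t : ℝ} (ht : t ∈ Icc a b) :
    ‖orderedIterIntegral α a n t‖ ≤ ‖(1 : A)‖ * ((M * (b - a)) ^ n / n !) := by
  have hM0 : 0 ≤ M := (norm_nonneg _).trans (hM t ht)
  refine (norm_orderedIterIntegral_le hM n ht).trans ?_
  gcongr
  · exact mul_nonneg hM0 (sub_nonneg.2 ht.1)
  · exact ht.2

end OrderedIterIntegral

section TimeOrderedExp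

variable {α : ℝ → A} {a b M : ℝ}

theorem hasSum_orderedIterIntegral (hM : ∀ s ∈ Icc a b, ‖α s‖ ≤ M) {t : ℝ}
    (ht : t ∈ Icc a b) :
    HasSum (fun n => orderedIterIntegral α a n t) (timeOrderedExp α a t) :=
  (((Real.summable_pow_div_factorial _).mul_left _).of_norm_bounded
    fun n => norm_orderedIterIntegral_le_uniform hM n ht).hasSum

theorem continuousOn_timeOrderedExp (hα : Continuous α) (hM : ∀ s ∈ Icc a b, ‖α s‖ ≤ M) :
    ContinuousOn (timeOrderedExp α a) (Icc a b) :=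
  continuousOn_tsum (fun n => (continuous_orderedIterIntegral hα a n).continuousOn)
    ((Real.summable_pow_div_factorial _).mul_left _)
    fun n _ ht => norm_orderedIterIntegral_le_uniform hM n ht

theorem timeOrderedExp_eq_one_add_integral (hα : Continuous α) (hM : ∀ s ∈ Icc a b, ‖α s‖ ≤ M)
    {t : ℝ} (ht : t ∈ Icc a b) :
    timeOrderedExp α a t = 1 + ∫ s in a..t, timeOrderedExp α a s * α s := by
  have hsub : Ι a t ⊆ Icc a b := (uIoc_of_le ht.1).trans_subset
    fun s hs => ⟨hs.1.le, hs.2.trans ht.2⟩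
  have hbound : ∀ n, ∀ s ∈ Ι a t,
      ‖orderedIterIntegral α a n s * α s‖ ≤ ‖(1 : A)‖ * ((M * (b - a)) ^ n / n !) * M :=
    fun n s hs =>
      have hI := norm_orderedIterIntegral_le_uniform hM n (hsub hs)
      (norm_mul_le _ _).trans <|
        mul_le_mul hI (hM s (hsub hs)) (norm_nonneg _) ((norm_nonneg _).trans hI)
  have hsum : HasSum (fun n => orderedIterIntegral α a (n + 1) t)
      (∫ s in a..t, timeOrderedExp α a s * α s) :=
    intervalIntegral.hasSum_integral_of_dominated_convergence
      (fun n _ => ‖(1 : A)‖ * ((M * (b - a)) ^ n / n !) * M)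
      (fun n => ((continuous_orderedIterIntegral hα a n).mul hα).aestronglyMeasurable)
      (fun n => ae_of_all _ (hbound n))
      (ae_of_all _ fun _ _ => ((Real.summable_pow_div_factorial _).mul_left _).mul_right _)
      intervalIntegrable_const
      (ae_of_all _ fun s hs => (hasSum_orderedIterIntegral hM (hsub hs)).mul_right (α s))
  rw [timeOrderedExp, (hasSum_orderedIterIntegral hM ht).summable.tsum_eq_zero_add,
    hsum.tsum_eq]
  rfl

theorem hasDerivWithinAt_timeOrderedExp (hα : Continuous α) {t : ℝ} (ht : t ∈ Icc a b) :
    HasDerivWithinAt (timeOrderedExp α a) (timeOrderedExp α a t * α t) (Icc a b) t := by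
  obtain ⟨M, hM⟩ := isCompact_Icc.exists_bound_of_continuousOn hα.continuousOn (s := Icc a b)
  have hF := hasDerivWithinAt_integral_Icc
    ((continuousOn_timeOrderedExp hα hM).mul hα.continuousOn) ht
  exact (hF.const_add 1).congr (fun s hs => timeOrderedExp_eq_one_add_integral hα hM hs)
    (timeOrderedExp_eq_one_add_integral hα hM ht)

end TimeOrderedExp

theorem timeOrderedExp_solves_ODE_general (α : ℝ → A) (a b : ℝ)
    (hα : Continuous α) :
    timeOrderedExp α a a = 1 ∧
    (∀ t ∈ Set.Icc a b,
      HasDerivWithinAt (timeOrderedExp α a) (timeOrderedExp α a t * α t) (Set.Icc a b) t) ∧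
    (∀ g : ℝ → A, g a = 1 →
      (∀ t ∈ Set.Icc a b, HasDerivWithinAt g (g t * α t) (Set.Icc a b) t) →
      ∀ t ∈ Set.Icc a b, g t = timeOrderedExp α a t) :=
  ⟨timeOrderedExp_self α a, fun _ ht => hasDerivWithinAt_timeOrderedExp hα ht,
    fun _ hg0 hg _ ht => eqOn_of_hasDerivWithinAt_mul_right hα.continuousOn hg
      (fun _ ht => hasDerivWithinAt_timeOrderedExp hα ht) (by rw [hg0, timeOrderedExp_self]) ht⟩

/-- The time-ordered exponential solves the linear ODE: for a continuous `α` with values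
in a Banach algebra, `g = timeOrderedExp α a` satisfies `g(a) = 1` and
`g'(t) = g(t)·α(t)` on `[a,b]`, and it is the unique such solution with `g(a) = 1`. -/
theorem timeOrderedExp_solves_ODE (α : ℝ → A) (a b : ℝ) (hab : a ≤ b)
    (hα : Continuous α) :
    timeOrderedExp α a a = 1 ∧
    (∀ t ∈ Set.Icc a b,
      HasDerivWithinAt (timeOrderedExp α a) (timeOrderedExp α a t * α t) (Set.Icc a b) t) ∧
    (∀ g : ℝ → A, g a = 1 →
      (∀ t ∈ Set.Icc a b, HasDerivWithinAt g (g t * α t) (Set.Icc a b) t) →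
      ∀ t ∈ Set.Icc a b, g t = timeOrderedExp α a t) :=
  timeOrderedExp_solves_ODE_general α a b hα
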